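/- Let y₁, y₂, y₃, y₄ be C⁶ functions on [−1,1] with y₁ = 0 near −1 and (1−x²)² near 1; y₂ = (1−x²)² near −1 and 0 near 1; y₃ = 0 near −1 and 1−x² near 1; y₄ = 1−x² near −1 and 0 near 1. Then [yᵢ, yⱼ]_H = 0 for all i, j ∈ {1,2,3,4}, where [f,g]_H = [f,g]_K(1) − [f,g]_K(−1). -/

import Mathlib

open Set Filter Topology intervalIntegral

noncomputable def krallAlpha (A B : ℝ) : ℝ := 3*A + 3*B + 6

noncomputable def krallPi (A B : ℝ) (x : ℝ) : ℝ :=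
  (-6*A - 6*B - 12*A*B)*x^2 + (12*A - 12*B)*x + (12*A*B + 18*A + 18*B + 24)

/-- The sixth-order Krall differential expression, expanded form. -/
noncomputable def lK (A B : ℝ) (y : ℝ → ℝ) (x : ℝ) : ℝ :=
  (x^2 - 1)^3 * iteratedDeriv 6 y x
  + 18*x*(x^2 - 1)^2 * iteratedDeriv 5 y x
  + (x^2 - 1)*((3*A + 3*B + 96)*x^2 - 3*A - 3*B - 36) * iteratedDeriv 4 y x
  + (24*A + 24*B + 168)*x*(x^2 - 1) * iteratedDeriv 3 y x
  + ((12*A*B + 42*A + 42*B + 72)*x^2 + (12*B - 12*A)*x - 12*A*B - 30*A - 30*B - 72)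
      * iteratedDeriv 2 y x
  + ((24*A*B + 12*A + 12*B)*x + 12*B - 12*A) * deriv y x

/-- The sixth-order Krall differential expression, Lagrangian symmetric form. -/
noncomputable def lKsym (A B : ℝ) (y : ℝ → ℝ) (x : ℝ) : ℝ :=
  - iteratedDeriv 3 (fun t => (1 - t^2)^3 * iteratedDeriv 3 y t) x
  + iteratedDeriv 2 (fun t => (1 - t^2)*(12 + krallAlpha A B * (1 - t^2)) * iteratedDeriv 2 y t) x
  - deriv (fun t => krallPi A B t * deriv y t) x

/-- Λ[f](x) = −((1−x²)³f‴(x))′ + (1−x²)(12+α(1−x²))f″(x). -/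
noncomputable def LamK (A B : ℝ) (f : ℝ → ℝ) (x : ℝ) : ℝ :=
  - deriv (fun t => (1 - t^2)^3 * iteratedDeriv 3 f t) x
  + (1 - x^2)*(12 + krallAlpha A B * (1 - x^2)) * iteratedDeriv 2 f x

/-- [f,1]_K(x) = −((1−x²)³f‴)″ + ((1−x²)(12+α(1−x²))f″)′ − π(x)f′(x). -/
noncomputable def concOne (A B : ℝ) (f : ℝ → ℝ) (x : ℝ) : ℝ :=
  - iteratedDeriv 2 (fun t => (1 - t^2)^3 * iteratedDeriv 3 f t) x
  + deriv (fun t => (1 - t^2)*(12 + krallAlpha A B * (1 - t^2)) * iteratedDeriv 2 f t) x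
  - krallPi A B x * deriv f x

/-- The bilinear concomitant [f,g]_K of the Krall expression (real-valued case). -/
noncomputable def conc (A B : ℝ) (f g : ℝ → ℝ) (x : ℝ) : ℝ :=
  concOne A B f x * g x - concOne A B g x * f x
  - LamK A B f x * deriv g x + LamK A B g x * deriv f x
  - (1 - x^2)^3 * (iteratedDeriv 3 f x * iteratedDeriv 2 g x
      - iteratedDeriv 2 f x * iteratedDeriv 3 g x)

/-!
The concomitant `[f,g]_K(x)` only sees the germs of `f` and `g` at `x`, and near either endpoint
every `yᵢ` coincides with one of the polynomials `0`, `(1 - x²)²`, `1 - x²`. On polynomials the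
concomitant is the evaluation of a formal concomitant built from `Polynomial.derivative`. It is
antisymmetric and vanishes when one argument is `0`, and a direct computation gives
`[(1 - x²)², 1 - x²]_K = (1 - x²)² x (…)`. Hence every `[yᵢ,yⱼ]_K` tends to `0` at both endpoints.
-/

open Polynomial

theorem Polynomial.iteratedDeriv_eval {𝕜 : Type*} [NontriviallyNormedField 𝕜] (p : 𝕜[X]) (n : ℕ) :
    iteratedDeriv n (fun x => p.eval x) = fun x => (derivative^[n] p).eval x := by
  induction n generalizing p with
  | zero => simp
  | succ n ih =>
    have hd : deriv (fun x => p.eval x) = fun x => p.derivative.eval x :=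
      _root_.funext fun _ => p.deriv
    rw [iteratedDeriv_succ', hd, ih, Function.iterate_succ_apply]

section Locality

variable {A B : ℝ} {s : Set ℝ} {f g u v : ℝ → ℝ}

theorem eqOn_mul_iteratedDeriv (h : EqOn f g s) (hs : IsOpen s) (c : ℝ → ℝ) (n : ℕ) :
    EqOn (fun t => c t * iteratedDeriv n f t) (fun t => c t * iteratedDeriv n g t) s :=
  fun _ ht => by simp only [h.iteratedDeriv_of_isOpen hs n ht]

theorem eqOn_lamK (h : EqOn f g s) (hs : IsOpen s) : EqOn (LamK A B f) (LamK A B g) s := by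
  intro x hx
  rw [LamK, LamK, (eqOn_mul_iteratedDeriv h hs (fun t => (1 - t^2)^3) 3).deriv hs hx,
    h.iteratedDeriv_of_isOpen hs 2 hx]

theorem eqOn_concOne (h : EqOn f g s) (hs : IsOpen s) :
    EqOn (concOne A B f) (concOne A B g) s := by
  intro x hx
  rw [concOne, concOne,
    (eqOn_mul_iteratedDeriv h hs (fun t => (1 - t^2)^3) 3).iteratedDeriv_of_isOpen hs 2 hx,
    (eqOn_mul_iteratedDeriv h hs (fun t => (1 - t^2) * (12 + krallAlpha A B * (1 - t^2))) 2).deriv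
      hs hx,
    h.deriv hs hx]

theorem eqOn_conc (hu : EqOn u f s) (hv : EqOn v g s) (hs : IsOpen s) :
    EqOn (conc A B u v) (conc A B f g) s := by
  intro x hx
  simp only [conc, eqOn_concOne hu hs hx, eqOn_concOne hv hs hx, eqOn_lamK hu hs hx,
    eqOn_lamK hv hs hx, hu.deriv hs hx, hv.deriv hs hx, hu.iteratedDeriv_of_isOpen hs 2 hx,
    hv.iteratedDeriv_of_isOpen hs 2 hx, hu.iteratedDeriv_of_isOpen hs 3 hx,
    hv.iteratedDeriv_of_isOpen hs 3 hx, hu hx, hv hx]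

end Locality

section FormalConcomitant

variable (A B : ℝ)

noncomputable def krallPiPoly : ℝ[X] :=
  C (-6*A - 6*B - 12*A*B) * X^2 + C (12*A - 12*B) * X + C (12*A*B + 18*A + 18*B + 24)

noncomputable def lamKPoly (p : ℝ[X]) : ℝ[X] :=
  -derivative ((1 - X^2)^3 * derivative^[3] p)
  + (1 - X^2) * (12 + C (krallAlpha A B) * (1 - X^2)) * derivative^[2] p

noncomputable def concOnePoly (p : ℝ[X]) : ℝ[X] :=
  -derivative^[2] ((1 - X^2)^3 * derivative^[3] p)
  + derivative ((1 - X^2) * (12 + C (krallAlpha A B) * (1 - X^2)) * derivative^[2] p)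
  - krallPiPoly A B * derivative p

noncomputable def concPoly (p q : ℝ[X]) : ℝ[X] :=
  concOnePoly A B p * q - concOnePoly A B q * p
  - lamKPoly A B p * derivative q + lamKPoly A B q * derivative p
  - (1 - X^2)^3 * (derivative^[3] p * derivative^[2] q - derivative^[2] p * derivative^[3] q)

theorem lamK_eval (p : ℝ[X]) :
    LamK A B (fun t => p.eval t) = fun x => (lamKPoly A B p).eval x := by
  funext x
  have h3 : (fun t => (1 - t^2)^3 * iteratedDeriv 3 (fun t => p.eval t) t)
      = fun t => ((1 - X^2)^3 * derivative^[3] p).eval t := by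
    simp [Polynomial.iteratedDeriv_eval]
  rw [LamK, h3, Polynomial.deriv, Polynomial.iteratedDeriv_eval]
  simp [lamKPoly]

theorem concOne_eval (p : ℝ[X]) :
    concOne A B (fun t => p.eval t) = fun x => (concOnePoly A B p).eval x := by
  funext x
  have h3 : (fun t => (1 - t^2)^3 * iteratedDeriv 3 (fun t => p.eval t) t)
      = fun t => ((1 - X^2)^3 * derivative^[3] p).eval t := by
    simp [Polynomial.iteratedDeriv_eval]
  have h2 : (fun t => (1 - t^2) * (12 + krallAlpha A B * (1 - t^2))
        * iteratedDeriv 2 (fun t => p.eval t) t)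
      = fun t => ((1 - X^2) * (12 + C (krallAlpha A B) * (1 - X^2)) * derivative^[2] p).eval t := by
    simp [Polynomial.iteratedDeriv_eval]
  rw [concOne, h3, h2, Polynomial.iteratedDeriv_eval, Polynomial.deriv, Polynomial.deriv]
  simp [concOnePoly, krallPi, krallPiPoly]

theorem conc_eval (p q : ℝ[X]) :
    conc A B (fun t => p.eval t) (fun t => q.eval t) = fun x => (concPoly A B p q).eval x := by
  funext x
  simp [conc, concPoly, concOne_eval, lamK_eval, Polynomial.iteratedDeriv_eval, Polynomial.deriv]

theorem concPoly_comm (p q : ℝ[X]) : concPoly A B q p = -concPoly A B p q := by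
  simp only [concPoly]
  ring

theorem concPoly_self (p : ℝ[X]) : concPoly A B p p = 0 := by
  simp only [concPoly]
  ring

theorem concPoly_zero_left (q : ℝ[X]) : concPoly A B 0 q = 0 := by
  simp [concPoly, concOnePoly, lamKPoly]

theorem eval_concPoly_sq_one_sub_sq_one_sub_sq (x : ℝ) :
    (concPoly A B ((1 - X^2)^2) (1 - X^2)).eval x = (1 - x^2)^2 * x *
      ((1008 + 132*A + 132*B + 24*A*B) + (24*A - 24*B)*x
        - (1008 + 156*A + 156*B + 24*A*B)*x^2) := by
  simp only [concPoly, concOnePoly, lamKPoly, krallPiPoly, krallAlpha, Function.iterate_succ_apply',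
    Function.iterate_zero_apply, derivative_mul, derivative_pow, derivative_add, derivative_sub,
    derivative_one, derivative_X, derivative_C, derivative_ofNat, eval_add, eval_sub,
    eval_mul, eval_neg, eval_pow, eval_C, eval_one, eval_X, eval_ofNat]
  norm_num
  ring

end FormalConcomitant

noncomputable def endpointProfiles : Set ℝ[X] := {0, (1 - X^2)^2, 1 - X^2}

theorem eval_concPoly_eq_zero {A B a : ℝ} (ha : a^2 = 1) {p q : ℝ[X]}
    (hp : p ∈ endpointProfiles) (hq : q ∈ endpointProfiles) : (concPoly A B p q).eval a = 0 := by
  have hPQ : (concPoly A B ((1 - X^2)^2) (1 - X^2)).eval a = 0 := by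
    rw [eval_concPoly_sq_one_sub_sq_one_sub_sq, ha]
    ring
  rcases hp with rfl | rfl | rfl <;> rcases hq with rfl | rfl | rfl
  all_goals first
    | rw [concPoly_self, eval_zero]
    | rw [concPoly_zero_left, eval_zero]
    | rw [concPoly_comm, concPoly_zero_left, neg_zero, eval_zero]
    | rw [hPQ]
    | rw [concPoly_comm, eval_neg, hPQ, neg_zero]

theorem tendsto_conc_of_eqOn_endpointProfiles {A B a : ℝ} {s t : Set ℝ} {u v : ℝ → ℝ}
    (ha : a^2 = 1) (hs : IsOpen s) (hst : s ∈ 𝓝[t] a)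
    (hu : ∃ p ∈ endpointProfiles, EqOn u (fun x => p.eval x) s)
    (hv : ∃ q ∈ endpointProfiles, EqOn v (fun x => q.eval x) s) :
    Tendsto (conc A B u v) (𝓝[t] a) (𝓝 0) := by
  obtain ⟨p, hp, hup⟩ := hu
  obtain ⟨q, hq, hvq⟩ := hv
  have hconc : EqOn (fun x => (concPoly A B p q).eval x) (conc A B u v) s := by
    rw [← conc_eval]
    exact (eqOn_conc hup hvq hs).symm
  have hlim := ((concPoly A B p q).continuous.tendsto a).mono_left (nhdsWithin_le_nhds (s := t))
  rw [eval_concPoly_eq_zero ha hp hq] at hlim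
  exact hlim.congr' (eventuallyEq_of_mem hst hconc)

theorem krall_gkn_set_symmetry_general (A B : ℝ)
    (y₁ y₂ y₃ y₄ : ℝ → ℝ)
    (ε : ℝ) (hε : 0 < ε)
    (h₁l : ∀ x ∈ Set.Ioo (-1 : ℝ) (-1 + ε), y₁ x = 0)
    (h₁r : ∀ x ∈ Set.Ioo (1 - ε : ℝ) 1, y₁ x = (1 - x^2)^2)
    (h₂l : ∀ x ∈ Set.Ioo (-1 : ℝ) (-1 + ε), y₂ x = (1 - x^2)^2)
    (h₂r : ∀ x ∈ Set.Ioo (1 - ε : ℝ) 1, y₂ x = 0)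
    (h₃l : ∀ x ∈ Set.Ioo (-1 : ℝ) (-1 + ε), y₃ x = 0)
    (h₃r : ∀ x ∈ Set.Ioo (1 - ε : ℝ) 1, y₃ x = 1 - x^2)
    (h₄l : ∀ x ∈ Set.Ioo (-1 : ℝ) (-1 + ε), y₄ x = 1 - x^2)
    (h₄r : ∀ x ∈ Set.Ioo (1 - ε : ℝ) 1, y₄ x = 0) :
    ∀ u ∈ ({y₁, y₂, y₃, y₄} : Set (ℝ → ℝ)), ∀ v ∈ ({y₁, y₂, y₃, y₄} : Set (ℝ → ℝ)),
      ∃ L₁ L₂ : ℝ,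
        Filter.Tendsto (conc A B u v) (nhdsWithin 1 (Set.Ioo (-1 : ℝ) 1)) (nhds L₁) ∧
        Filter.Tendsto (conc A B u v) (nhdsWithin (-1) (Set.Ioo (-1 : ℝ) 1)) (nhds L₂) ∧
        L₁ - L₂ = 0 := by
  have h0 (x : ℝ) : (0 : ℝ) = (0 : ℝ[X]).eval x := by simp
  have hP (x : ℝ) : (1 - x^2)^2 = ((1 - X^2)^2 : ℝ[X]).eval x := by simp
  have hQ (x : ℝ) : 1 - x^2 = (1 - X^2 : ℝ[X]).eval x := by simp
  have hR : Ioo (1 - ε) 1 ∈ 𝓝[Ioo (-1) 1] (1 : ℝ) := by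
    rw [nhdsWithin_Ioo_eq_nhdsLT (by norm_num)]
    exact Ioo_mem_nhdsLT (by linarith)
  have hL : Ioo (-1) (-1 + ε) ∈ 𝓝[Ioo (-1) 1] (-1 : ℝ) := by
    rw [nhdsWithin_Ioo_eq_nhdsGT (by norm_num)]
    exact Ioo_mem_nhdsGT (by linarith)
  have profR : ∀ w ∈ ({y₁, y₂, y₃, y₄} : Set (ℝ → ℝ)),
      ∃ p ∈ endpointProfiles, EqOn w (fun x => p.eval x) (Ioo (1 - ε) 1) := by
    rintro w (rfl | rfl | rfl | rfl)
    exacts [⟨_, by simp [endpointProfiles], fun x hx => (h₁r x hx).trans (hP x)⟩,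
      ⟨_, by simp [endpointProfiles], fun x hx => (h₂r x hx).trans (h0 x)⟩,
      ⟨_, by simp [endpointProfiles], fun x hx => (h₃r x hx).trans (hQ x)⟩,
      ⟨_, by simp [endpointProfiles], fun x hx => (h₄r x hx).trans (h0 x)⟩]
  have profL : ∀ w ∈ ({y₁, y₂, y₃, y₄} : Set (ℝ → ℝ)),
      ∃ p ∈ endpointProfiles, EqOn w (fun x => p.eval x) (Ioo (-1) (-1 + ε)) := by
    rintro w (rfl | rfl | rfl | rfl)
    exacts [⟨_, by simp [endpointProfiles], fun x hx => (h₁l x hx).trans (h0 x)⟩,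
      ⟨_, by simp [endpointProfiles], fun x hx => (h₂l x hx).trans (hP x)⟩,
      ⟨_, by simp [endpointProfiles], fun x hx => (h₃l x hx).trans (h0 x)⟩,
      ⟨_, by simp [endpointProfiles], fun x hx => (h₄l x hx).trans (hQ x)⟩]
  intro u hu v hv
  exact ⟨0, 0,
    tendsto_conc_of_eqOn_endpointProfiles (by norm_num) isOpen_Ioo hR (profR u hu) (profR v hv),
    tendsto_conc_of_eqOn_endpointProfiles (by norm_num) isOpen_Ioo hL (profL u hu) (profL v hv),
    sub_self 0⟩

/-- the functions y₁, y₂, y₃, y₄ satisfy the symmetry conditions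
[yᵢ,yⱼ]_H = 0, where [f,g]_H = [f,g]_K(1) − [f,g]_K(−1) (limits at the endpoints). -/
theorem krall_gkn_set_symmetry (A B : ℝ) (hA : 0 < A) (hB : 0 < B)
    (y₁ y₂ y₃ y₄ : ℝ → ℝ)
    (h₁ : ContDiffOn ℝ 6 y₁ (Set.Ioo (-1 : ℝ) 1))
    (h₂ : ContDiffOn ℝ 6 y₂ (Set.Ioo (-1 : ℝ) 1))
    (h₃ : ContDiffOn ℝ 6 y₃ (Set.Ioo (-1 : ℝ) 1))
    (h₄ : ContDiffOn ℝ 6 y₄ (Set.Ioo (-1 : ℝ) 1))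
    (ε : ℝ) (hε : 0 < ε)
    (h₁l : ∀ x ∈ Set.Ioo (-1 : ℝ) (-1 + ε), y₁ x = 0)
    (h₁r : ∀ x ∈ Set.Ioo (1 - ε : ℝ) 1, y₁ x = (1 - x^2)^2)
    (h₂l : ∀ x ∈ Set.Ioo (-1 : ℝ) (-1 + ε), y₂ x = (1 - x^2)^2)
    (h₂r : ∀ x ∈ Set.Ioo (1 - ε : ℝ) 1, y₂ x = 0)
    (h₃l : ∀ x ∈ Set.Ioo (-1 : ℝ) (-1 + ε), y₃ x = 0)
    (h₃r : ∀ x ∈ Set.Ioo (1 - ε : ℝ) 1, y₃ x = 1 - x^2)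
    (h₄l : ∀ x ∈ Set.Ioo (-1 : ℝ) (-1 + ε), y₄ x = 1 - x^2)
    (h₄r : ∀ x ∈ Set.Ioo (1 - ε : ℝ) 1, y₄ x = 0) :
    ∀ u ∈ ({y₁, y₂, y₃, y₄} : Set (ℝ → ℝ)), ∀ v ∈ ({y₁, y₂, y₃, y₄} : Set (ℝ → ℝ)),
      ∃ L₁ L₂ : ℝ,
        Filter.Tendsto (conc A B u v) (nhdsWithin 1 (Set.Ioo (-1 : ℝ) 1)) (nhds L₁) ∧
        Filter.Tendsto (conc A B u v) (nhdsWithin (-1) (Set.Ioo (-1 : ℝ) 1)) (nhds L₂) ∧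
        L₁ - L₂ = 0 :=
  krall_gkn_set_symmetry_general A B y₁ y₂ y₃ y₄ ε hε h₁l h₁r h₂l h₂r h₃l h₃r h₄l h₄r
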